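/- Let X, Y ∈ C_t(n,k) be distinct with dim(X ∩ Y) = k−1. Then X ∩ Y ∈ C_t(n,k−1) if and only if every k-dimensional subspace Z of F_q^n with X ∩ Y ⊆ Z ⊆ X + Y belongs to C_t(n,k). (This expresses the transparency of the inclusion embedding of the geometry P_t(n,k) into the Grassmann geometry: the line of the Grassmann geometry through X and Y is entirely contained in C_t(n,k) if and only if X and Y are adjacent in Λ_t(n,k).) -/

import Mathlib

/-!
Put `W := X ∩ Y`. A `k`-space `Z ⊇ W` has dual contained in that of `W`, so it is good when `W`
is. Conversely, `X + Y` has dimension `k + 1`, so a nonzero dual vector `v` of `W` is orthogonal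
either to all of `X + Y` (hence to `X`) or to exactly the hyperplane `(X + Y) ∩ v^⊥`, a `k`-space
through `W`; in both cases `v` is dual to a good `k`-code, so its weight is at least `t + 1`.
-/

open Finset

variable (F : Type) [Field F] [Fintype F] [DecidableEq F]

/-- The dual code of a linear code `C ⊆ F^n`, with respect to the standard bilinear form. -/
def dualCode (n : ℕ) (C : Submodule F (Fin n → F)) : Submodule F (Fin n → F) where
  carrier := {v | ∀ c ∈ C, ∑ i, v i * c i = 0}
  zero_mem' := by intro c _; simp
  add_mem' := by
    intro a b ha hb c hc
    simp only [Set.mem_setOf_eq] at *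
    simp [add_mul, Finset.sum_add_distrib, ha c hc, hb c hc]
  smul_mem' := by
    intro r a ha c hc
    simp only [Set.mem_setOf_eq] at *
    simp [smul_eq_mul, mul_assoc, ← Finset.mul_sum, ha c hc]

/-- `goodCode F n t k C` says that `C` is an `[n,k]`-linear code over `F` whose dual minimum
distance is at least `t+1`, i.e. `C ∈ C_t(n,k)`. -/
def goodCode (n t k : ℕ) (C : Submodule F (Fin n → F)) : Prop :=
  Module.finrank F C = k ∧ ∀ v ∈ dualCode F n C, v ≠ 0 → t + 1 ≤ hammingNorm v

/-- The Grassmann graph `Δ_t(n,k)` of codes in `C_t(n,k)`: two codes are adjacent iff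
their intersection has dimension `k-1`. -/
def deltaGraph (n t k : ℕ) : SimpleGraph {C : Submodule F (Fin n → F) // goodCode F n t k C} where
  Adj X Y := X ≠ Y ∧ Module.finrank F ↥(X.1 ⊓ Y.1) = k - 1
  symm := by
    constructor
    rintro X Y ⟨h1, h2⟩
    exact ⟨h1.symm, by rwa [inf_comm]⟩
  loopless := by constructor; rintro X ⟨h1, _⟩; exact h1 rfl

/-- The graph `Λ_t(n,k)` of codes in `C_t(n,k)`: two codes are adjacent iff
their intersection belongs to `C_t(n,k-1)`. -/
def lambdaGraph (n t k : ℕ) : SimpleGraph {C : Submodule F (Fin n → F) // goodCode F n t k C} where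
  Adj X Y := X ≠ Y ∧ goodCode F n t (k-1) (X.1 ⊓ Y.1)
  symm := by
    constructor
    rintro X Y ⟨h1, h2⟩
    exact ⟨h1.symm, by rwa [inf_comm]⟩
  loopless := by constructor; rintro X ⟨h1, _⟩; exact h1 rfl

/-- A code `C ∈ C_t(n,k)` is isolated if no `(k-1)`-dimensional subspace of `C`
belongs to `C_t(n,k-1)`. -/
def IsIsolated (n t k : ℕ) (C : Submodule F (Fin n → F)) : Prop :=
  ∀ D : Submodule F (Fin n → F), D ≤ C → ¬ goodCode F n t (k-1) D

/-- A monomial transformation of `F^n`: a permutation of the coordinates composed with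
multiplication of each coordinate by a nonzero scalar. -/
def IsMonomial (n : ℕ) (ρ : (Fin n → F) ≃ₗ[F] (Fin n → F)) : Prop :=
  ∃ (σ : Equiv.Perm (Fin n)) (d : Fin n → F),
    (∀ i, d i ≠ 0) ∧ ∀ (v : Fin n → F) (i : Fin n), ρ v i = d i * v (σ i)

/-- `S_s(Ω)`: the set of points (`1`-dimensional subspaces) of `PG(k-1,q)` lying on a subspace
spanned by `s+1` points of `Ω`. (We represent any subspace by the corresponding submodule of
`F^k`, and points of `PG(k-1,q)` by `1`-dimensional submodules.) -/
def satPoints (k s : ℕ) (Ω : Set (Submodule F (Fin k → F))) : Set (Submodule F (Fin k → F)) :=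
  {P | ∃ T : Finset (Submodule F (Fin k → F)), ↑T ⊆ Ω ∧ T.card = s + 1 ∧ P ≤ T.sup id}

/-- A set `Ω` of points of `PG(k-1,q)` is `s`-saturating if `S_s(Ω)` is the whole point set of
`PG(k-1,q)` while (for `s ≥ 1`) `S_{s-1}(Ω)` is not. -/
def IsSaturating (k s : ℕ) (Ω : Set (Submodule F (Fin k → F))) : Prop :=
  (∀ P : Submodule F (Fin k → F), Module.finrank F P = 1 → P ∈ satPoints F k s Ω) ∧
  (1 ≤ s → ¬ ∀ P : Submodule F (Fin k → F), Module.finrank F P = 1 → P ∈ satPoints F k (s-1) Ω)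

theorem Submodule.finrank_inf_ker_add_one {K V : Type*} [Field K] [AddCommGroup V] [Module K V]
    {S : Submodule K V} [FiniteDimensional K S] {φ : Module.Dual K V}
    (hS : ¬ S ≤ LinearMap.ker φ) :
    Module.finrank K ↥(S ⊓ LinearMap.ker φ) + 1 = Module.finrank K S := by
  have hφS : φ ∘ₗ S.subtype ≠ 0 := fun h ↦ hS fun x hx ↦ LinearMap.congr_fun h ⟨x, hx⟩
  rw [← Module.Dual.finrank_ker_add_one_of_ne_zero hφS, LinearMap.ker_comp,
    ← Submodule.finrank_map_subtype_eq, Submodule.map_comap_subtype]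

section Codes

variable {K : Type} [Field K] {n : ℕ}

theorem mem_dualCode_iff_le_ker {C : Submodule K (Fin n → K)} {v : Fin n → K} :
    v ∈ dualCode K n C ↔ C ≤ LinearMap.ker (dotProductEquiv K (Fin n) v) :=
  Iff.rfl

theorem dualCode_anti {C D : Submodule K (Fin n → K)} (h : C ≤ D) :
    dualCode K n D ≤ dualCode K n C :=
  fun _ hv c hc ↦ hv c (h hc)

theorem goodCode.of_le [DecidableEq K] {t j k : ℕ} {C D : Submodule K (Fin n → K)}
    (hC : goodCode K n t j C) (hCD : C ≤ D) (hD : Module.finrank K D = k) :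
    goodCode K n t k D :=
  ⟨hD, fun v hv ↦ hC.2 v (dualCode_anti hCD hv)⟩

theorem exists_hyperplane_mem_dualCode {W Z₀ S : Submodule K (Fin n → K)}
    (hWZ₀ : W ≤ Z₀) (hZ₀S : Z₀ ≤ S) (hZ₀ : Module.finrank K Z₀ + 1 = Module.finrank K S)
    {v : Fin n → K} (hv : v ∈ dualCode K n W) :
    ∃ Z : Submodule K (Fin n → K), Module.finrank K Z + 1 = Module.finrank K S ∧
      W ≤ Z ∧ Z ≤ S ∧ v ∈ dualCode K n Z := by
  by_cases hSv : v ∈ dualCode K n S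
  · exact ⟨Z₀, hZ₀, hWZ₀, hZ₀S, dualCode_anti hZ₀S hSv⟩
  · rw [mem_dualCode_iff_le_ker] at hv hSv
    exact ⟨S ⊓ LinearMap.ker _, Submodule.finrank_inf_ker_add_one hSv,
      le_inf (hWZ₀.trans hZ₀S) hv, inf_le_left, mem_dualCode_iff_le_ker.2 inf_le_right⟩

end Codes

theorem transparency
    {n k t : ℕ} (hk : 0 < k)
    (X Y : Submodule F (Fin n → F))
    (hX : goodCode F n t k X) (hY : goodCode F n t k Y)
    (hdim : Module.finrank F ↥(X ⊓ Y) = k - 1) :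
    goodCode F n t (k-1) (X ⊓ Y) ↔
      ∀ Z : Submodule F (Fin n → F), Module.finrank F Z = k →
        X ⊓ Y ≤ Z → Z ≤ X ⊔ Y → goodCode F n t k Z := by
  have hsup : Module.finrank F ↥(X ⊔ Y) = k + 1 := by
    have := Submodule.finrank_sup_add_finrank_inf_eq X Y
    rw [hdim, hX.1, hY.1] at this
    omega
  refine ⟨fun hW Z hZ hWZ _ ↦ hW.of_le hWZ hZ, fun h ↦ ⟨hdim, fun v hv ↦ ?_⟩⟩
  obtain ⟨Z, hZ, hWZ, hZS, hvZ⟩ :=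
    exists_hyperplane_mem_dualCode inf_le_left le_sup_left (by rw [hX.1, hsup]) hv
  exact (h Z (by omega) hWZ hZS).2 v hvZ
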